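/- arXiv:1608.08948 — 2 statements merged into one kernel-verified Lean document; each statement's English description precedes it below -/
import Mathlib

section
/- Let n ≥ 4 and let G = ([n], w) be a multigraph in which every 4-element vertex set spans total multiplicity at most 9 and every edge multiplicity is at most 2 and at least 0. Suppose additionally every 3-element vertex set spans total multiplicity at most 5, and all edge multiplicities are at least 1. Let E be the set of pairs with multiplicity 2. Then the graph ([n], E) contains no C₃ and no C₄, and consequently the product of all edge multiplicities of G equals 2^|E| ≤ 2^(ex(n,{C₃,C₄})). -/
open Finset

def pairs (n : ℕ) (X : Finset (Fin n)) : Finset (Fin n × Fin n) :=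
  (X ×ˢ X).filter (fun p => p.1 < p.2)

def mgS (n : ℕ) (w : Fin n → Fin n → ℕ) (X : Finset (Fin n)) : ℕ :=
  ∑ p ∈ pairs n X, w p.1 p.2

def mgP (n : ℕ) (w : Fin n → Fin n → ℕ) (X : Finset (Fin n)) : ℕ :=
  ∏ p ∈ pairs n X, w p.1 p.2

def IsNSQ (n s q : ℕ) (w : Fin n → Fin n → ℕ) : Prop :=
  ∀ X : Finset (Fin n), X.card = s → mgS n w X ≤ q

def C3C4Free {n : ℕ} (G : SimpleGraph (Fin n)) : Prop :=
  (∀ x y z : Fin n, G.Adj x y → G.Adj y z → G.Adj x z → False) ∧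
  (∀ a b c d : Fin n, a ≠ c → b ≠ d →
    G.Adj a b → G.Adj b c → G.Adj c d → G.Adj d a → False)

noncomputable def exC34 (n : ℕ) : ℕ :=
  sSup {m | ∃ G : SimpleGraph (Fin n), C3C4Free G ∧ m = Nat.card G.edgeSet}

/-!
A triangle of doubled pairs is a 3-set of total multiplicity 6 > 5, and a 4-cycle of doubled
pairs, whose two diagonals have multiplicity at least 1, is a 4-set of total multiplicity at
least 10 > 9. As every multiplicity is 1 or 2, the product of all of them is 2 to the number
of doubled pairs, i.e. of edges of the {C₃, C₄}-free graph they form.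
-/

theorem Finset.prod_eq_two_pow_card_filter {ι : Type*} (s : Finset ι) (f : ι → ℕ)
    (hf : ∀ i ∈ s, f i = 1 ∨ f i = 2) :
    ∏ i ∈ s, f i = 2 ^ #(s.filter (f · = 2)) := by
  rw [← prod_filter_mul_prod_filter_not s (f · = 2),
    prod_congr rfl fun i hi => (mem_filter.mp hi).2, prod_const,
    prod_eq_one fun i hi => (hf i (mem_filter.mp hi).1).resolve_right (mem_filter.mp hi).2,
    mul_one]

section

variable {n : ℕ}

theorem mem_pairs {X : Finset (Fin n)} {p : Fin n × Fin n} :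
    p ∈ pairs n X ↔ p.1 ∈ X ∧ p.2 ∈ X ∧ p.1 < p.2 := by
  simp [pairs, and_assoc]

theorem card_edgeSet_eq_card_pairs_filter (G : SimpleGraph (Fin n)) [DecidableRel G.Adj] :
    Nat.card G.edgeSet = #((pairs n univ).filter fun p => G.Adj p.1 p.2) := by
  rw [Nat.card_eq_fintype_card, ← SimpleGraph.edgeFinset_card]
  symm
  apply card_nbij' (fun p => s(p.1, p.2)) (fun e => (e.inf, e.sup))
  · intro p hp
    simpa using (mem_filter.mp hp).2
  · intro e he
    induction e with | _ a b
    have hab : G.Adj a b := by simpa using he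
    rcases hab.ne.lt_or_gt with h | h
    · simp [mem_pairs, h, h.le, hab]
    · simp [mem_pairs, h, h.le, hab.symm]
  · intro p hp
    have h := (mem_pairs.mp (mem_filter.mp hp).1).2.2
    simp [h.le]
  · intro e _
    exact Sym2.sortEquiv.left_inv e

theorem card_edgeSet_le_exC34 (G : SimpleGraph (Fin n)) (hG : C3C4Free G) :
    Nat.card G.edgeSet ≤ exC34 n := by
  refine le_csSup ⟨Nat.card (Sym2 (Fin n)), ?_⟩ ⟨G, hG, rfl⟩
  rintro m ⟨H, -, rfl⟩
  exact Nat.card_le_card_of_injective _ Subtype.val_injective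

variable {w : Fin n → Fin n → ℕ}

theorem two_mul_mgS (hsym : ∀ i j, w i j = w j i) (X : Finset (Fin n)) :
    2 * mgS n w X = ∑ p ∈ X.offDiag, w p.1 p.2 := by
  have hsplit : X.offDiag = pairs n X ∪ (pairs n X).map (Equiv.prodComm _ _).toEmbedding := by
    ext ⟨a, b⟩
    grind [mem_pairs, mem_map_equiv]
  have hdisj : Disjoint (pairs n X) ((pairs n X).map (Equiv.prodComm _ _).toEmbedding) := by
    rw [disjoint_left]
    rintro ⟨a, b⟩ h h'
    grind [mem_pairs, mem_map_equiv]
  rw [hsplit, sum_union hdisj, sum_map]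
  simp [mgS, hsym _ _, two_mul]

theorem mgS_singleton (a : Fin n) : mgS n w {a} = 0 := by
  simp [mgS, pairs]

theorem mgS_insert (hsym : ∀ i j, w i j = w j i) {a : Fin n} {X : Finset (Fin n)} (ha : a ∉ X) :
    mgS n w (insert a X) = mgS n w X + ∑ b ∈ X, w a b := by
  have h := two_mul_mgS hsym (insert a X)
  rw [offDiag_insert ha, sum_union (by grind [disjoint_left]), sum_union (by grind [disjoint_left]),
    ← two_mul_mgS hsym, singleton_product, product_singleton, sum_map, sum_map] at h
  simp only [Function.Embedding.coeFn_mk, hsym _ a] at h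
  omega

theorem mgS_triple (hsym : ∀ i j, w i j = w j i) {x y z : Fin n}
    (hxy : x ≠ y) (hxz : x ≠ z) (hyz : y ≠ z) :
    mgS n w {x, y, z} = w x y + w x z + w y z := by
  rw [mgS_insert hsym (by simp [hxy, hxz]), mgS_insert hsym (by simpa), mgS_singleton,
    sum_singleton, sum_pair hyz]
  ring

theorem mgS_quadruple (hsym : ∀ i j, w i j = w j i) {a b c d : Fin n}
    (hab : a ≠ b) (hac : a ≠ c) (had : a ≠ d) (hbc : b ≠ c) (hbd : b ≠ d) (hcd : c ≠ d) :
    mgS n w {a, b, c, d} = w a b + w a c + w a d + w b c + w b d + w c d := by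
  rw [mgS_insert hsym (by simp [hab, hac, had]), mgS_triple hsym hbc hbd hcd,
    sum_insert (by simp [hbc, hbd]), sum_pair hcd]
  ring

theorem not_all_two_of_isNSQ_three_five (hsym : ∀ i j, w i j = w j i) (h35 : IsNSQ n 3 5 w)
    {x y z : Fin n} (hxy : x ≠ y) (hxz : x ≠ z) (hyz : y ≠ z) :
    ¬(w x y = 2 ∧ w x z = 2 ∧ w y z = 2) := by
  have := h35 {x, y, z} (card_eq_three.mpr ⟨x, y, z, hxy, hxz, hyz, rfl⟩)
  rw [mgS_triple hsym hxy hxz hyz] at this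
  omega

theorem not_cycle_two_of_isNSQ_four_nine (hsym : ∀ i j, w i j = w j i) (h49 : IsNSQ n 4 9 w)
    (hpos : ∀ i j, i ≠ j → 1 ≤ w i j) {a b c d : Fin n}
    (hab : a ≠ b) (hac : a ≠ c) (had : a ≠ d) (hbc : b ≠ c) (hbd : b ≠ d) (hcd : c ≠ d) :
    ¬(w a b = 2 ∧ w b c = 2 ∧ w c d = 2 ∧ w a d = 2) := by
  have := h49 {a, b, c, d} (card_eq_four.mpr ⟨a, b, c, d, hab, hac, had, hbc, hbd, hcd, rfl⟩)
  rw [mgS_quadruple hsym hab hac had hbc hbd hcd] at this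
  have := hpos a c hac
  have := hpos b d hbd
  omega

theorem fromRel_eq_two_adj (hsym : ∀ i j, w i j = w j i) {i j : Fin n} :
    (SimpleGraph.fromRel fun i j => w i j = 2).Adj i j ↔ i ≠ j ∧ w i j = 2 := by
  rw [SimpleGraph.fromRel_adj, hsym j i, or_self]

theorem c3c4Free_fromRel_eq_two (hsym : ∀ i j, w i j = w j i) (h49 : IsNSQ n 4 9 w)
    (h35 : IsNSQ n 3 5 w) (hpos : ∀ i j, i ≠ j → 1 ≤ w i j) :
    C3C4Free (SimpleGraph.fromRel fun i j => w i j = 2) := by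
  simp only [C3C4Free, fromRel_eq_two_adj hsym]
  constructor
  · rintro x y z ⟨hxy, wxy⟩ ⟨hyz, wyz⟩ ⟨hxz, wxz⟩
    exact not_all_two_of_isNSQ_three_five hsym h35 hxy hxz hyz ⟨wxy, wxz, wyz⟩
  · rintro a b c d hac hbd ⟨hab, wab⟩ ⟨hbc, wbc⟩ ⟨hcd, wcd⟩ ⟨hda, wda⟩
    exact not_cycle_two_of_isNSQ_four_nine hsym h49 hpos hab hac hda.symm hbc hbd hcd
      ⟨wab, wbc, wcd, hsym d a ▸ wda⟩

theorem mgP_univ_eq_two_pow (hsym : ∀ i j, w i j = w j i)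
    (hmult : ∀ i j, i ≠ j → 1 ≤ w i j ∧ w i j ≤ 2) :
    mgP n w univ = 2 ^ Nat.card (SimpleGraph.fromRel fun i j => w i j = 2).edgeSet := by
  classical
  rw [mgP, prod_eq_two_pow_card_filter, card_edgeSet_eq_card_pairs_filter]
  · congr 2
    refine filter_congr fun p hp => ?_
    rw [fromRel_eq_two_adj hsym, and_iff_right (mem_pairs.mp hp).2.2.ne]
  · intro p hp
    have := hmult p.1 p.2 (mem_pairs.mp hp).2.2.ne
    omega

end

theorem mult2_pairs_C3C4Free_general (n : ℕ) (w : Fin n → Fin n → ℕ)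
    (hsym : ∀ i j, w i j = w j i)
    (h49 : IsNSQ n 4 9 w)
    (h35 : IsNSQ n 3 5 w)
    (hmult : ∀ i j : Fin n, i ≠ j → 1 ≤ w i j ∧ w i j ≤ 2) :
    C3C4Free (SimpleGraph.fromRel (fun i j : Fin n => w i j = 2)) ∧
    mgP n w Finset.univ =
      2 ^ Nat.card (SimpleGraph.fromRel (fun i j : Fin n => w i j = 2)).edgeSet ∧
    Nat.card (SimpleGraph.fromRel (fun i j : Fin n => w i j = 2)).edgeSet ≤ exC34 n := by
  have hfree := c3c4Free_fromRel_eq_two hsym h49 h35 fun i j hij => (hmult i j hij).1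
  exact ⟨hfree, mgP_univ_eq_two_pow hsym hmult, card_edgeSet_le_exC34 _ hfree⟩

theorem mult2_pairs_C3C4Free (n : ℕ) (hn : 4 ≤ n) (w : Fin n → Fin n → ℕ)
    (hsym : ∀ i j, w i j = w j i)
    (h49 : IsNSQ n 4 9 w)
    (h35 : IsNSQ n 3 5 w)
    (hmult : ∀ i j : Fin n, i ≠ j → 1 ≤ w i j ∧ w i j ≤ 2) :
    C3C4Free (SimpleGraph.fromRel (fun i j : Fin n => w i j = 2)) ∧
    mgP n w Finset.univ =
      2 ^ Nat.card (SimpleGraph.fromRel (fun i j : Fin n => w i j = 2)).edgeSet ∧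
    Nat.card (SimpleGraph.fromRel (fun i j : Fin n => w i j = 2)).edgeSet ≤ exC34 n :=
  mult2_pairs_C3C4Free_general n w hsym h49 h35 hmult
end

section
/- Let G = ([n], w) be a multigraph with all edge multiplicities at least 1, n ≥ 4, satisfying the (4,9)-condition, and suppose the product of edge multiplicities of G is maximal among all (n,4,9)-graphs. Then every edge of G has multiplicity at most 2. -/
open Finset

section Aux
variable {n : ℕ} (w : Fin n → Fin n → ℕ)

lemma swap_sum (hsym : ∀ i j, w i j = w j i) (X : Finset (Fin n)) :
    ∑ p ∈ (X ×ˢ X).filter (fun p => p.2 < p.1), w p.1 p.2 = mgS n w X := by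
  unfold mgS pairs
  refine Finset.sum_bij' (fun p _ => (p.2, p.1)) (fun p _ => (p.2, p.1)) ?_ ?_ ?_ ?_ ?_
  · intro p hp; simp at hp ⊢; tauto
  · intro p hp; simp at hp ⊢; tauto
  · intro p hp; rfl
  · intro p hp; rfl
  · intro p hp; exact hsym p.1 p.2

lemma swap_prod (hsym : ∀ i j, w i j = w j i) (X : Finset (Fin n)) :
    ∏ p ∈ (X ×ˢ X).filter (fun p => p.2 < p.1), w p.1 p.2 = mgP n w X := by
  unfold mgP pairs
  refine Finset.prod_bij' (fun p _ => (p.2, p.1)) (fun p _ => (p.2, p.1)) ?_ ?_ ?_ ?_ ?_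
  · intro p hp; simp at hp ⊢; tauto
  · intro p hp; simp at hp ⊢; tauto
  · intro p hp; rfl
  · intro p hp; rfl
  · intro p hp; exact hsym p.1 p.2

lemma offdiag_eq_union (X : Finset (Fin n)) :
    (X ×ˢ X).filter (fun p => p.1 ≠ p.2) =
      (X ×ˢ X).filter (fun p => p.1 < p.2) ∪ (X ×ˢ X).filter (fun p => p.2 < p.1) := by
  rw [← Finset.filter_or]
  apply Finset.filter_congr
  intro p _; exact ne_iff_lt_or_gt

lemma offdiag_disj (X : Finset (Fin n)) :
    Disjoint ((X ×ˢ X).filter (fun p => p.1 < p.2)) ((X ×ˢ X).filter (fun p => p.2 < p.1)) := by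
  rw [Finset.disjoint_left]
  intro p h1 h2
  rw [Finset.mem_filter] at h1 h2
  exact absurd h2.2 (not_lt.mpr (le_of_lt h1.2))

lemma offdiag_split (hsym : ∀ i j, w i j = w j i) (X : Finset (Fin n)) :
    ∑ p ∈ (X ×ˢ X).filter (fun p => p.1 ≠ p.2), w p.1 p.2 = 2 * mgS n w X := by
  rw [offdiag_eq_union, Finset.sum_union (offdiag_disj X), swap_sum w hsym]
  unfold mgS pairs; omega

lemma offdiag_split_prod (hsym : ∀ i j, w i j = w j i) (X : Finset (Fin n)) :
    ∏ p ∈ (X ×ˢ X).filter (fun p => p.1 ≠ p.2), w p.1 p.2 = mgP n w X * mgP n w X := by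
  rw [offdiag_eq_union, Finset.prod_union (offdiag_disj X), swap_prod w hsym]
  rfl

lemma offdiag_quad {a b c d : Fin n} (hab : a ≠ b) (hac : a ≠ c) (had : a ≠ d)
    (hbc : b ≠ c) (hbd : b ≠ d) (hcd : c ≠ d) :
    ((({a,b,c,d} : Finset (Fin n)) ×ˢ ({a,b,c,d} : Finset (Fin n))).filter
      (fun p => p.1 ≠ p.2)) =
    {(a,b),(a,c),(a,d),(b,a),(b,c),(b,d),(c,a),(c,b),(c,d),(d,a),(d,b),(d,c)} := by
  ext ⟨i, j⟩
  simp only [Finset.mem_filter, Finset.mem_product, Finset.mem_insert, Finset.mem_singleton,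
    Prod.mk.injEq]
  constructor
  · rintro ⟨⟨hi, hj⟩, hne⟩
    rcases hi with rfl|rfl|rfl|rfl <;> rcases hj with rfl|rfl|rfl|rfl <;> simp_all
  · rintro (⟨rfl,rfl⟩|⟨rfl,rfl⟩|⟨rfl,rfl⟩|⟨rfl,rfl⟩|⟨rfl,rfl⟩|⟨rfl,rfl⟩|⟨rfl,rfl⟩|⟨rfl,rfl⟩|⟨rfl,rfl⟩|⟨rfl,rfl⟩|⟨rfl,rfl⟩|⟨rfl,rfl⟩) <;>
      simp_all [Ne.symm]

lemma offdiag_triple {a b c : Fin n} (hab : a ≠ b) (hac : a ≠ c) (hbc : b ≠ c) :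
    ((({a,b,c} : Finset (Fin n)) ×ˢ ({a,b,c} : Finset (Fin n))).filter
      (fun p => p.1 ≠ p.2)) =
    {(a,b),(a,c),(b,a),(b,c),(c,a),(c,b)} := by
  ext ⟨i, j⟩
  simp only [Finset.mem_filter, Finset.mem_product, Finset.mem_insert, Finset.mem_singleton,
    Prod.mk.injEq]
  constructor
  · rintro ⟨⟨hi, hj⟩, hne⟩
    rcases hi with rfl|rfl|rfl <;> rcases hj with rfl|rfl|rfl <;> simp_all
  · rintro (⟨rfl,rfl⟩|⟨rfl,rfl⟩|⟨rfl,rfl⟩|⟨rfl,rfl⟩|⟨rfl,rfl⟩|⟨rfl,rfl⟩) <;> simp_all [Ne.symm]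

lemma quadS (hsym : ∀ i j, w i j = w j i) {a b c d : Fin n} (hab : a ≠ b) (hac : a ≠ c)
    (had : a ≠ d) (hbc : b ≠ c) (hbd : b ≠ d) (hcd : c ≠ d) :
    mgS n w {a,b,c,d} = w a b + w a c + w a d + w b c + w b d + w c d := by
  have h1 : b ≠ a := hab.symm
  have h2 : c ≠ a := hac.symm
  have h3 : d ≠ a := had.symm
  have h4 : c ≠ b := hbc.symm
  have h5 : d ≠ b := hbd.symm
  have h6 : d ≠ c := hcd.symm
  have key := offdiag_split w hsym ({a,b,c,d} : Finset (Fin n))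
  rw [offdiag_quad hab hac had hbc hbd hcd] at key
  simp [Finset.sum_insert, Finset.mem_insert, Finset.mem_singleton, Prod.mk.injEq,
    hab, hac, had, hbc, hbd, hcd, h1, h2, h3, h4, h5, h6] at key
  have e1 : w b a = w a b := hsym b a
  have e2 : w c a = w a c := hsym c a
  have e3 : w d a = w a d := hsym d a
  have e4 : w c b = w b c := hsym c b
  have e5 : w d b = w b d := hsym d b
  have e6 : w d c = w c d := hsym d c
  omega

lemma quadP (hsym : ∀ i j, w i j = w j i) {a b c d : Fin n} (hab : a ≠ b) (hac : a ≠ c)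
    (had : a ≠ d) (hbc : b ≠ c) (hbd : b ≠ d) (hcd : c ≠ d) :
    mgP n w {a,b,c,d} = w a b * w a c * w a d * w b c * w b d * w c d := by
  have h1 : b ≠ a := hab.symm
  have h2 : c ≠ a := hac.symm
  have h3 : d ≠ a := had.symm
  have h4 : c ≠ b := hbc.symm
  have h5 : d ≠ b := hbd.symm
  have h6 : d ≠ c := hcd.symm
  have key := offdiag_split_prod w hsym ({a,b,c,d} : Finset (Fin n))
  rw [offdiag_quad hab hac had hbc hbd hcd] at key
  simp [Finset.prod_insert, Finset.mem_insert, Finset.mem_singleton, Prod.mk.injEq,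
    hab, hac, had, hbc, hbd, hcd, h1, h2, h3, h4, h5, h6] at key
  have e1 : w b a = w a b := hsym b a
  have e2 : w c a = w a c := hsym c a
  have e3 : w d a = w a d := hsym d a
  have e4 : w c b = w b c := hsym c b
  have e5 : w d b = w b d := hsym d b
  have e6 : w d c = w c d := hsym d c
  rw [e1, e2, e3, e4, e5, e6] at key
  refine (mul_self_inj (Nat.zero_le _) (Nat.zero_le _)).mp ?_
  rw [← key]; ring

lemma tripP (hsym : ∀ i j, w i j = w j i) {a b c : Fin n} (hab : a ≠ b) (hac : a ≠ c)
    (hbc : b ≠ c) :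
    mgP n w {a,b,c} = w a b * w a c * w b c := by
  have h1 : b ≠ a := hab.symm
  have h2 : c ≠ a := hac.symm
  have h4 : c ≠ b := hbc.symm
  have key := offdiag_split_prod w hsym ({a,b,c} : Finset (Fin n))
  rw [offdiag_triple hab hac hbc] at key
  simp [Finset.prod_insert, Finset.mem_insert, Finset.mem_singleton, Prod.mk.injEq,
    hab, hac, hbc, h1, h2, h4] at key
  have e1 : w b a = w a b := hsym b a
  have e2 : w c a = w a c := hsym c a
  have e4 : w c b = w b c := hsym c b
  rw [e1, e2, e4] at key
  refine (mul_self_inj (Nat.zero_le _) (Nat.zero_le _)).mp ?_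
  rw [← key]; ring

lemma card_quad {a b c d : Fin n} (hab : a ≠ b) (hac : a ≠ c) (had : a ≠ d)
    (hbc : b ≠ c) (hbd : b ≠ d) (hcd : c ≠ d) :
    ({a,b,c,d} : Finset (Fin n)).card = 4 := by
  rw [Finset.card_insert_of_notMem (by simp [hab, hac, had]),
    Finset.card_insert_of_notMem (by simp [hbc, hbd]),
    Finset.card_insert_of_notMem (by simp [hcd]), Finset.card_singleton]

lemma exists_four {X : Finset (Fin n)} (h : X.card = 4) :
    ∃ a b c d : Fin n, a ≠ b ∧ a ≠ c ∧ a ≠ d ∧ b ≠ c ∧ b ≠ d ∧ c ≠ d ∧ X = {a,b,c,d} := by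
  obtain ⟨a, Y, haY, rfl, hY⟩ := Finset.card_eq_succ.mp h
  obtain ⟨b, c, d, hbc, hbd, hcd, rfl⟩ := Finset.card_eq_three.mp hY
  simp only [Finset.mem_insert, Finset.mem_singleton] at haY
  push_neg at haY
  exact ⟨a, b, c, d, haY.1, haY.2.1, haY.2.2, hbc, hbd, hcd, rfl⟩

lemma exists_fresh (s : Finset (Fin n)) (h : s.card < n) : ∃ v : Fin n, v ∉ s := by
  by_contra hc
  push_neg at hc
  have : (Finset.univ : Finset (Fin n)) ⊆ s := fun v _ => hc v
  have := Finset.card_le_card this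
  simp at this
  omega

lemma mgP_pos (hpos : ∀ i j : Fin n, i ≠ j → 1 ≤ w i j) (X : Finset (Fin n)) :
    1 ≤ mgP n w X := by
  apply Finset.one_le_prod'
  intro p hp
  rw [pairs, Finset.mem_filter] at hp
  exact hpos p.1 p.2 (ne_of_lt hp.2)

lemma prod_compare (w' : Fin n → Fin n → ℕ) (Q : Finset (Fin n))
    (hagree : ∀ i j : Fin n, i < j → (i ∉ Q ∨ j ∉ Q) → w' i j = w i j) :
    mgP n w' Finset.univ * mgP n w Q = mgP n w Finset.univ * mgP n w' Q := by
  have hsub : pairs n Q ⊆ pairs n Finset.univ := by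
    apply Finset.filter_subset_filter
    exact Finset.product_subset_product (Finset.subset_univ Q) (Finset.subset_univ Q)
  have hW : mgP n w Finset.univ = (∏ p ∈ pairs n Finset.univ \ pairs n Q, w p.1 p.2) * mgP n w Q := by
    rw [mgP, mgP, ← Finset.prod_sdiff hsub]
  have hW' : mgP n w' Finset.univ = (∏ p ∈ pairs n Finset.univ \ pairs n Q, w' p.1 p.2) * mgP n w' Q := by
    rw [mgP, mgP, ← Finset.prod_sdiff hsub]
  have heq : ∏ p ∈ pairs n Finset.univ \ pairs n Q, w' p.1 p.2
      = ∏ p ∈ pairs n Finset.univ \ pairs n Q, w p.1 p.2 := by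
    apply Finset.prod_congr rfl
    intro p hp
    rw [Finset.mem_sdiff] at hp
    obtain ⟨hp1, hp2⟩ := hp
    rw [pairs, Finset.mem_filter] at hp1 hp2
    apply hagree p.1 p.2 hp1.2
    by_contra hcon
    push_neg at hcon
    exact hp2 ⟨Finset.mk_mem_product hcon.1 hcon.2, hp1.2⟩
  rw [hW, hW', heq]
  ring

end Aux


section Tri
variable {n : ℕ} (w : Fin n → Fin n → ℕ)

lemma six_le (hsym : ∀ i j, w i j = w j i) (h49 : IsNSQ n 4 9 w) {a b c d : Fin n}
    (hab : a ≠ b) (hac : a ≠ c) (had : a ≠ d) (hbc : b ≠ c) (hbd : b ≠ d) (hcd : c ≠ d) :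
    w a b + w a c + w a d + w b c + w b d + w c d ≤ 9 := by
  have := h49 {a,b,c,d} (card_quad hab hac had hbc hbd hcd)
  rwa [quadS w hsym hab hac had hbc hbd hcd] at this

lemma tri_competitor (hsym : ∀ i j, w i j = w j i) (h49 : IsNSQ n 4 9 w)
    {a b c : Fin n} (hab : a ≠ b) (hac : a ≠ c) (hbc : b ≠ c)
    (h1 : ∀ u : Fin n, u ≠ a → u ≠ b → u ≠ c → w a u = 1 ∧ w b u = 1 ∧ w c u = 1)
    (h2 : ∀ u v : Fin n, u ≠ a → u ≠ b → v ≠ a → v ≠ b → u ≠ v → w u v ≤ 2) :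
    ∃ w' : Fin n → Fin n → ℕ, (∀ i j, w' i j = w' j i) ∧ IsNSQ n 4 9 w' ∧
      mgP n w' Finset.univ * (w a b * w a c * w b c) = mgP n w Finset.univ * 8 := by
  set W : Fin n → Fin n → ℕ := fun i j =>
    if i ≠ j ∧ (i = a ∨ i = b ∨ i = c) ∧ (j = a ∨ j = b ∨ j = c) then 2 else w i j with hW
  have Hin : ∀ u v : Fin n, u ≠ v → (u = a ∨ u = b ∨ u = c) → (v = a ∨ v = b ∨ v = c) →
      W u v = 2 := by
    intro u v h t1 t2
    simp only [hW]
    rw [if_pos ⟨h, t1, t2⟩]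
  have Hout_eq : ∀ u v : Fin n, ¬(u = a ∨ u = b ∨ u = c) ∨ ¬(v = a ∨ v = b ∨ v = c) →
      W u v = w u v := by
    intro u v h
    simp only [hW]
    rw [if_neg (by tauto)]
  have Hcross : ∀ u v : Fin n, u ≠ v → (u = a ∨ u = b ∨ u = c) → ¬(v = a ∨ v = b ∨ v = c) →
      W u v = 1 ∧ W v u = 1 := by
    intro u v h t1 t2
    push_neg at t2
    obtain ⟨v1, v2, v3⟩ := t2
    have hv := h1 v v1 v2 v3
    have e1 : W u v = w u v := Hout_eq u v (Or.inr (by tauto))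
    have e2 : W v u = w v u := Hout_eq v u (Or.inl (by tauto))
    rcases t1 with rfl|rfl|rfl
    · exact ⟨by rw [e1]; exact hv.1, by rw [e2, ← hsym]; exact hv.1⟩
    · exact ⟨by rw [e1]; exact hv.2.1, by rw [e2, ← hsym]; exact hv.2.1⟩
    · exact ⟨by rw [e1]; exact hv.2.2, by rw [e2, ← hsym]; exact hv.2.2⟩
  have Hout2 : ∀ u v : Fin n, ¬(u = a ∨ u = b ∨ u = c) → ¬(v = a ∨ v = b ∨ v = c) →
      u ≠ v → W u v ≤ 2 := by
    intro u v t1 t2 h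
    rw [Hout_eq u v (Or.inl t1)]
    push_neg at t1 t2
    exact h2 u v t1.1 t1.2.1 t2.1 t2.2.1 h
  have Wsym : ∀ i j, W i j = W j i := by
    intro i j
    by_cases h : i ≠ j ∧ (i = a ∨ i = b ∨ i = c) ∧ (j = a ∨ j = b ∨ j = c)
    · simp only [hW]; rw [if_pos h, if_pos ⟨h.1.symm, h.2.2, h.2.1⟩]
    · simp only [hW]; rw [if_neg h, if_neg (by tauto)]
      by_cases hij : i = j
      · rw [hij]
      · exact hsym i j
  refine ⟨W, Wsym, ?_, ?_⟩
  · intro X hX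
    obtain ⟨p, q, r, s, hpq, hpr, hps, hqr, hqs, hrs, rfl⟩ := exists_four hX
    rw [quadS W Wsym hpq hpr hps hqr hqs hrs]
    have noquad : (p = a ∨ p = b ∨ p = c) → (q = a ∨ q = b ∨ q = c) →
        (r = a ∨ r = b ∨ r = c) → (s = a ∨ s = b ∨ s = c) → False := by
      intro t1 t2 t3 t4
      rcases t1 with rfl|rfl|rfl <;> rcases t2 with rfl|rfl|rfl <;>
        rcases t3 with rfl|rfl|rfl <;> tauto
    have hsix := six_le w hsym h49 hpq hpr hps hqr hqs hrs
    by_cases Tp : p = a ∨ p = b ∨ p = c <;> by_cases Tq : q = a ∨ q = b ∨ q = c <;>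
      by_cases Tr : r = a ∨ r = b ∨ r = c <;> by_cases Ts : s = a ∨ s = b ∨ s = c
    · exact absurd (noquad Tp Tq Tr Ts) not_false
    ·
      have epq : W p q = 2 := Hin p q hpq Tp Tq
      have epr : W p r = 2 := Hin p r hpr Tp Tr
      have eps : W p s = 1 := (Hcross p s hps Tp Ts).1
      have eqr : W q r = 2 := Hin q r hqr Tq Tr
      have eqs : W q s = 1 := (Hcross q s hqs Tq Ts).1
      have ers : W r s = 1 := (Hcross r s hrs Tr Ts).1
      omega
    ·
      have epq : W p q = 2 := Hin p q hpq Tp Tq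
      have epr : W p r = 1 := (Hcross p r hpr Tp Tr).1
      have eps : W p s = 2 := Hin p s hps Tp Ts
      have eqr : W q r = 1 := (Hcross q r hqr Tq Tr).1
      have eqs : W q s = 2 := Hin q s hqs Tq Ts
      have ers : W r s = 1 := (Hcross s r (Ne.symm hrs) Ts Tr).2
      omega
    ·
      have epq : W p q = 2 := Hin p q hpq Tp Tq
      have epr : W p r = 1 := (Hcross p r hpr Tp Tr).1
      have eps : W p s = 1 := (Hcross p s hps Tp Ts).1
      have eqr : W q r = 1 := (Hcross q r hqr Tq Tr).1
      have eqs : W q s = 1 := (Hcross q s hqs Tq Ts).1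
      have ers : W r s ≤ 2 := Hout2 r s Tr Ts hrs
      omega
    ·
      have epq : W p q = 1 := (Hcross p q hpq Tp Tq).1
      have epr : W p r = 2 := Hin p r hpr Tp Tr
      have eps : W p s = 2 := Hin p s hps Tp Ts
      have eqr : W q r = 1 := (Hcross r q (Ne.symm hqr) Tr Tq).2
      have eqs : W q s = 1 := (Hcross s q (Ne.symm hqs) Ts Tq).2
      have ers : W r s = 2 := Hin r s hrs Tr Ts
      omega
    ·
      have epq : W p q = 1 := (Hcross p q hpq Tp Tq).1
      have epr : W p r = 2 := Hin p r hpr Tp Tr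
      have eps : W p s = 1 := (Hcross p s hps Tp Ts).1
      have eqr : W q r = 1 := (Hcross r q (Ne.symm hqr) Tr Tq).2
      have eqs : W q s ≤ 2 := Hout2 q s Tq Ts hqs
      have ers : W r s = 1 := (Hcross r s hrs Tr Ts).1
      omega
    ·
      have epq : W p q = 1 := (Hcross p q hpq Tp Tq).1
      have epr : W p r = 1 := (Hcross p r hpr Tp Tr).1
      have eps : W p s = 2 := Hin p s hps Tp Ts
      have eqr : W q r ≤ 2 := Hout2 q r Tq Tr hqr
      have eqs : W q s = 1 := (Hcross s q (Ne.symm hqs) Ts Tq).2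
      have ers : W r s = 1 := (Hcross s r (Ne.symm hrs) Ts Tr).2
      omega
    ·
      have epq : W p q = 1 := (Hcross p q hpq Tp Tq).1
      have epr : W p r = 1 := (Hcross p r hpr Tp Tr).1
      have eps : W p s = 1 := (Hcross p s hps Tp Ts).1
      have eqr : W q r ≤ 2 := Hout2 q r Tq Tr hqr
      have eqs : W q s ≤ 2 := Hout2 q s Tq Ts hqs
      have ers : W r s ≤ 2 := Hout2 r s Tr Ts hrs
      omega
    ·
      have epq : W p q = 1 := (Hcross q p (Ne.symm hpq) Tq Tp).2
      have epr : W p r = 1 := (Hcross r p (Ne.symm hpr) Tr Tp).2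
      have eps : W p s = 1 := (Hcross s p (Ne.symm hps) Ts Tp).2
      have eqr : W q r = 2 := Hin q r hqr Tq Tr
      have eqs : W q s = 2 := Hin q s hqs Tq Ts
      have ers : W r s = 2 := Hin r s hrs Tr Ts
      omega
    ·
      have epq : W p q = 1 := (Hcross q p (Ne.symm hpq) Tq Tp).2
      have epr : W p r = 1 := (Hcross r p (Ne.symm hpr) Tr Tp).2
      have eps : W p s ≤ 2 := Hout2 p s Tp Ts hps
      have eqr : W q r = 2 := Hin q r hqr Tq Tr
      have eqs : W q s = 1 := (Hcross q s hqs Tq Ts).1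
      have ers : W r s = 1 := (Hcross r s hrs Tr Ts).1
      omega
    ·
      have epq : W p q = 1 := (Hcross q p (Ne.symm hpq) Tq Tp).2
      have epr : W p r ≤ 2 := Hout2 p r Tp Tr hpr
      have eps : W p s = 1 := (Hcross s p (Ne.symm hps) Ts Tp).2
      have eqr : W q r = 1 := (Hcross q r hqr Tq Tr).1
      have eqs : W q s = 2 := Hin q s hqs Tq Ts
      have ers : W r s = 1 := (Hcross s r (Ne.symm hrs) Ts Tr).2
      omega
    ·
      have epq : W p q = 1 := (Hcross q p (Ne.symm hpq) Tq Tp).2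
      have epr : W p r ≤ 2 := Hout2 p r Tp Tr hpr
      have eps : W p s ≤ 2 := Hout2 p s Tp Ts hps
      have eqr : W q r = 1 := (Hcross q r hqr Tq Tr).1
      have eqs : W q s = 1 := (Hcross q s hqs Tq Ts).1
      have ers : W r s ≤ 2 := Hout2 r s Tr Ts hrs
      omega
    ·
      have epq : W p q ≤ 2 := Hout2 p q Tp Tq hpq
      have epr : W p r = 1 := (Hcross r p (Ne.symm hpr) Tr Tp).2
      have eps : W p s = 1 := (Hcross s p (Ne.symm hps) Ts Tp).2
      have eqr : W q r = 1 := (Hcross r q (Ne.symm hqr) Tr Tq).2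
      have eqs : W q s = 1 := (Hcross s q (Ne.symm hqs) Ts Tq).2
      have ers : W r s = 2 := Hin r s hrs Tr Ts
      omega
    ·
      have epq : W p q ≤ 2 := Hout2 p q Tp Tq hpq
      have epr : W p r = 1 := (Hcross r p (Ne.symm hpr) Tr Tp).2
      have eps : W p s ≤ 2 := Hout2 p s Tp Ts hps
      have eqr : W q r = 1 := (Hcross r q (Ne.symm hqr) Tr Tq).2
      have eqs : W q s ≤ 2 := Hout2 q s Tq Ts hqs
      have ers : W r s = 1 := (Hcross r s hrs Tr Ts).1
      omega
    ·
      have epq : W p q ≤ 2 := Hout2 p q Tp Tq hpq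
      have epr : W p r ≤ 2 := Hout2 p r Tp Tr hpr
      have eps : W p s = 1 := (Hcross s p (Ne.symm hps) Ts Tp).2
      have eqr : W q r ≤ 2 := Hout2 q r Tq Tr hqr
      have eqs : W q s = 1 := (Hcross s q (Ne.symm hqs) Ts Tq).2
      have ers : W r s = 1 := (Hcross s r (Ne.symm hrs) Ts Tr).2
      omega
    ·
      have epq : W p q = w p q := Hout_eq p q (Or.inl Tp)
      have epr : W p r = w p r := Hout_eq p r (Or.inl Tp)
      have eps : W p s = w p s := Hout_eq p s (Or.inl Tp)
      have eqr : W q r = w q r := Hout_eq q r (Or.inl Tq)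
      have eqs : W q s = w q s := Hout_eq q s (Or.inl Tq)
      have ers : W r s = w r s := Hout_eq r s (Or.inl Tr)
      omega
  · have hagree : ∀ i j : Fin n, i < j → (i ∉ ({a,b,c} : Finset (Fin n)) ∨ j ∉ ({a,b,c} : Finset (Fin n))) → W i j = w i j := by
      intro i j _ h
      apply Hout_eq
      simpa [Finset.mem_insert] using h
    have hpc := prod_compare w W {a,b,c} hagree
    rw [tripP w hsym hab hac hbc, tripP W Wsym hab hac hbc] at hpc
    rw [Hin a b hab (by tauto) (by tauto), Hin a c hac (by tauto) (by tauto),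
      Hin b c hbc (by tauto) (by tauto)] at hpc
    exact hpc

end Tri


section C1
variable {n : ℕ}

def c1W (n : ℕ) (w : Fin n → Fin n → ℕ) (a b x y : Fin n) : Fin n → Fin n → ℕ :=
  fun i j =>
    if (i = a ∧ j = b) ∨ (i = b ∧ j = a) then 2
    else if (i = a ∧ j = x) ∨ (i = x ∧ j = a) then 2
    else if (i = b ∧ j = y) ∨ (i = y ∧ j = b) then 2
    else if (i = x ∧ j = y) ∨ (i = y ∧ j = x) then 1
    else w i j

variable (w : Fin n → Fin n → ℕ) {a b x y : Fin n}

lemma c1W_sym (hsym : ∀ i j, w i j = w j i) :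
    ∀ i j, c1W n w a b x y i j = c1W n w a b x y j i := by
  intro i j
  unfold c1W
  by_cases c1 : (i = a ∧ j = b) ∨ (i = b ∧ j = a)
  · rw [if_pos c1, if_pos (show (j = a ∧ i = b) ∨ (j = b ∧ i = a) by tauto)]
  · rw [if_neg c1, if_neg (show ¬((j = a ∧ i = b) ∨ (j = b ∧ i = a)) by tauto)]
    by_cases c2 : (i = a ∧ j = x) ∨ (i = x ∧ j = a)
    · rw [if_pos c2, if_pos (show (j = a ∧ i = x) ∨ (j = x ∧ i = a) by tauto)]
    · rw [if_neg c2, if_neg (show ¬((j = a ∧ i = x) ∨ (j = x ∧ i = a)) by tauto)]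
      by_cases c3 : (i = b ∧ j = y) ∨ (i = y ∧ j = b)
      · rw [if_pos c3, if_pos (show (j = b ∧ i = y) ∨ (j = y ∧ i = b) by tauto)]
      · rw [if_neg c3, if_neg (show ¬((j = b ∧ i = y) ∨ (j = y ∧ i = b)) by tauto)]
        by_cases c4 : (i = x ∧ j = y) ∨ (i = y ∧ j = x)
        · rw [if_pos c4, if_pos (show (j = x ∧ i = y) ∨ (j = y ∧ i = x) by tauto)]
        · rw [if_neg c4, if_neg (show ¬((j = x ∧ i = y) ∨ (j = y ∧ i = x)) by tauto)]
          exact hsym i j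

lemma c1W_ab : c1W n w a b x y a b = 2 := by
  unfold c1W; rw [if_pos (Or.inl ⟨rfl, rfl⟩)]

lemma c1W_ax (hab : a ≠ b) (xb : x ≠ b) : c1W n w a b x y a x = 2 := by
  unfold c1W; rw [if_neg (by tauto), if_pos (Or.inl ⟨rfl, rfl⟩)]

lemma c1W_by (hab : a ≠ b) (hbx : b ≠ x) (ya : y ≠ a) : c1W n w a b x y b y = 2 := by
  unfold c1W; rw [if_neg (by tauto), if_neg (by tauto), if_pos (Or.inl ⟨rfl, rfl⟩)]

lemma c1W_xy (xa : x ≠ a) (xb : x ≠ b) (ya : y ≠ a) (hxy : x ≠ y) :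
    c1W n w a b x y x y = 1 := by
  unfold c1W
  rw [if_neg (by tauto), if_neg (by tauto), if_neg (by tauto), if_pos (Or.inl ⟨rfl, rfl⟩)]

lemma c1W_a_out (hab : a ≠ b) (hax : a ≠ x) (hay : a ≠ y) {u : Fin n} (ub : u ≠ b)
    (ux : u ≠ x) : c1W n w a b x y a u = w a u := by
  unfold c1W
  rw [if_neg (by tauto), if_neg (by tauto), if_neg (by tauto), if_neg (by tauto)]

lemma c1W_b_out (hab : a ≠ b) (hbx : b ≠ x) (hby : b ≠ y) {u : Fin n} (ua : u ≠ a)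
    (uy : u ≠ y) : c1W n w a b x y b u = w b u := by
  unfold c1W
  rw [if_neg (by tauto), if_neg (by tauto), if_neg (by tauto), if_neg (by tauto)]

lemma c1W_x_out (xa : x ≠ a) (xb : x ≠ b) (hxy : x ≠ y) {u : Fin n} (ua : u ≠ a)
    (uy : u ≠ y) : c1W n w a b x y x u = w x u := by
  unfold c1W
  rw [if_neg (by tauto), if_neg (by tauto), if_neg (by tauto), if_neg (by tauto)]

lemma c1W_y_out (ya : y ≠ a) (yb : y ≠ b) (yx : y ≠ x) {u : Fin n} (ub : u ≠ b)
    (ux : u ≠ x) : c1W n w a b x y y u = w y u := by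
  unfold c1W
  rw [if_neg (by tauto), if_neg (by tauto), if_neg (by tauto), if_neg (by tauto)]

lemma c1W_out2 {u : Fin n} (ua : u ≠ a) (ub : u ≠ b) (ux : u ≠ x) (uy : u ≠ y)
    (v : Fin n) : c1W n w a b x y u v = w u v := by
  unfold c1W
  rw [if_neg (by tauto), if_neg (by tauto), if_neg (by tauto), if_neg (by tauto)]

lemma c1W_outQ {i j : Fin n}
    (h : ¬(i = a ∨ i = b ∨ i = x ∨ i = y) ∨ ¬(j = a ∨ j = b ∨ j = x ∨ j = y)) :
    c1W n w a b x y i j = w i j := by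
  unfold c1W
  rw [if_neg (by tauto), if_neg (by tauto), if_neg (by tauto), if_neg (by tauto)]

lemma c1_competitor (hsym : ∀ i j, w i j = w j i) (h49 : IsNSQ n 4 9 w)
    (hpos : ∀ i j : Fin n, i ≠ j → 1 ≤ w i j)
    {a b x y : Fin n} (hab : a ≠ b) (hax : a ≠ x) (hay : a ≠ y) (hbx : b ≠ x)
    (hby : b ≠ y) (hxy : x ≠ y)
    (h3 : w a b = 3)
    (cross1 : ∀ u : Fin n, u ≠ a → u ≠ b → w a u = 1 ∧ w b u = 1)
    (rest2 : ∀ u v : Fin n, u ≠ a → u ≠ b → v ≠ a → v ≠ b → u ≠ v → w u v ≤ 2)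
    (hbr : w x y = 2 ∨ (∀ u v : Fin n, u ≠ a → u ≠ b → v ≠ a → v ≠ b → u ≠ v → w u v = 1)) :
    ∃ w' : Fin n → Fin n → ℕ, (∀ i j, w' i j = w' j i) ∧ IsNSQ n 4 9 w' ∧
      mgP n w' Finset.univ * (3 * w x y) = mgP n w Finset.univ * 8 := by
  have xa : x ≠ a := hax.symm
  have xb : x ≠ b := hbx.symm
  have ya : y ≠ a := hay.symm
  have yb : y ≠ b := hby.symm
  have yx : y ≠ x := hxy.symm
  have P1x : ∀ u v : Fin n, u ≠ a → u ≠ b → u ≠ x → u ≠ y → v ≠ a → v ≠ b → v ≠ x →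
      v ≠ y → u ≠ v → w x u + w x v + w u v ≤ 5 := by
    intro u v ua ub ux uy va vb vx vy huv
    rcases hbr with h2 | hall
    · have hs := six_le w hsym h49 hxy ux.symm vx.symm uy.symm vy.symm huv
      have g1 := hpos y u uy.symm
      have g2 := hpos y v vy.symm
      omega
    · have e1 := hall x u xa xb ua ub ux.symm
      have e2 := hall x v xa xb va vb vx.symm
      have e3 := hall u v ua ub va vb huv
      omega
  have P1y : ∀ u v : Fin n, u ≠ a → u ≠ b → u ≠ x → u ≠ y → v ≠ a → v ≠ b → v ≠ x →
      v ≠ y → u ≠ v → w y u + w y v + w u v ≤ 5 := by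
    intro u v ua ub ux uy va vb vx vy huv
    rcases hbr with h2 | hall
    · have hs := six_le w hsym h49 hxy ux.symm vx.symm uy.symm vy.symm huv
      have g1 := hpos x u ux.symm
      have g2 := hpos x v vx.symm
      omega
    · have e1 := hall y u ya yb ua ub uy.symm
      have e2 := hall y v ya yb va vb vy.symm
      have e3 := hall u v ua ub va vb huv
      omega
  set W : Fin n → Fin n → ℕ := c1W n w a b x y with hW
  have Wsym : ∀ i j, W i j = W j i := c1W_sym w hsym
  have Eab : W a b = 2 := c1W_ab w
  have Eax : W a x = 2 := c1W_ax w hab xb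
  have Eby : W b y = 2 := c1W_by w hab hbx ya
  have Exy : W x y = 1 := c1W_xy w xa xb ya hxy
  have Ea_out : ∀ u : Fin n, u ≠ b → u ≠ x → W a u = w a u := fun u ub ux =>
    c1W_a_out w hab hax hay ub ux
  have Eb_out : ∀ u : Fin n, u ≠ a → u ≠ y → W b u = w b u := fun u ua uy =>
    c1W_b_out w hab hbx hby ua uy
  have Ex_out : ∀ u : Fin n, u ≠ a → u ≠ y → W x u = w x u := fun u ua uy =>
    c1W_x_out w xa xb hxy ua uy
  have Ey_out : ∀ u : Fin n, u ≠ b → u ≠ x → W y u = w y u := fun u ub ux =>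
    c1W_y_out w ya yb yx ub ux
  have Eout2 : ∀ u v : Fin n, u ≠ a → u ≠ b → u ≠ x → u ≠ y → W u v = w u v :=
    fun u v ua ub ux uy => c1W_out2 w ua ub ux uy v
  have Vay : W a y = 1 := by
    rw [Ea_out y yb yx]
    exact (cross1 y ya yb).1
  have Vbx : W b x = 1 := by
    rw [Eb_out x xa hxy]
    exact (cross1 x xa xb).2
  have Wa1 : ∀ u : Fin n, u ≠ a → u ≠ b → u ≠ x → W a u = 1 := by
    intro u ua ub ux
    rw [Ea_out u ub ux]
    exact (cross1 u ua ub).1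
  have Wb1 : ∀ u : Fin n, u ≠ a → u ≠ b → u ≠ y → W b u = 1 := by
    intro u ua ub uy
    rw [Eb_out u ua uy]
    exact (cross1 u ua ub).2
  have Wrest_le : ∀ u v : Fin n, u ≠ a → u ≠ b → v ≠ a → v ≠ b → u ≠ v → W u v ≤ 2 := by
    intro u v ua ub va vb huv
    by_cases hux : x = u
    · subst hux
      by_cases hvy : y = v
      · subst hvy; omega
      · rw [Ex_out v va (fun h => hvy h.symm)]
        exact rest2 x v ua ub va vb huv
    · by_cases huy : y = u
      · subst huy
        by_cases hvx : x = v
        · subst hvx; rw [Wsym]; omega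
        · rw [Ey_out v vb (fun h => hvx h.symm)]
          exact rest2 y v ua ub va vb huv
      · rw [Eout2 u v ua ub (fun h => hux h.symm) (fun h => huy h.symm)]
        exact rest2 u v ua ub va vb huv
  have Wrest_le_w : ∀ u v : Fin n, u ≠ a → u ≠ b → v ≠ a → v ≠ b → u ≠ v →
      W u v ≤ w u v := by
    intro u v ua ub va vb huv
    by_cases hux : x = u
    · subst hux
      by_cases hvy : y = v
      · subst hvy; rw [Exy]; exact hpos x y hxy
      · rw [Ex_out v va (fun h => hvy h.symm)]
    · by_cases huy : y = u
      · subst huy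
        by_cases hvx : x = v
        · subst hvx; rw [Wsym, Exy, hsym]; exact hpos x y hxy
        · rw [Ey_out v vb (fun h => hvx h.symm)]
      · rw [Eout2 u v ua ub (fun h => hux h.symm) (fun h => huy h.symm)]
  have Lab : ∀ u v : Fin n, u ≠ a → u ≠ b → v ≠ a → v ≠ b → u ≠ v →
      W a b + W a u + W a v + W b u + W b v + W u v ≤ 9 := by
    intro u v ua ub va vb huv
    by_cases hux : x = u
    · subst hux
      by_cases hvy : y = v
      · subst hvy; omega
      · have e1 : W a v = 1 := Wa1 v va vb huv.symm
        have e2 : W b v = 1 := Wb1 v va vb (fun h => hvy h.symm)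
        have e3 : W x v ≤ 2 := Wrest_le x v xa xb va vb huv
        omega
    · by_cases huy : y = u
      · subst huy
        by_cases hvx : x = v
        · subst hvx
          have e := Wsym y x
          omega
        · have e1 : W a v = 1 := Wa1 v va vb (fun h => hvx h.symm)
          have e2 : W b v = 1 := Wb1 v va vb huv.symm
          have e3 : W y v ≤ 2 := Wrest_le y v ya yb va vb huv
          omega
      · by_cases hvx : x = v
        · subst hvx
          have e1 : W a u = 1 := Wa1 u ua ub (fun h => hux h.symm)
          have e2 : W b u = 1 := Wb1 u ua ub (fun h => huy h.symm)
          have e3 : W u x ≤ 2 := Wrest_le u x ua ub xa xb huv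
          omega
        · by_cases hvy : y = v
          · subst hvy
            have e1 : W a u = 1 := Wa1 u ua ub (fun h => hux h.symm)
            have e2 : W b u = 1 := Wb1 u ua ub (fun h => huy h.symm)
            have e3 : W u y ≤ 2 := Wrest_le u y ua ub ya yb huv
            omega
          · have e1 : W a u = 1 := Wa1 u ua ub (fun h => hux h.symm)
            have e2 : W a v = 1 := Wa1 v va vb (fun h => hvx h.symm)
            have e3 : W b u = 1 := Wb1 u ua ub (fun h => huy h.symm)
            have e4 : W b v = 1 := Wb1 v va vb (fun h => hvy h.symm)
            have e5 : W u v ≤ 2 := Wrest_le u v ua ub va vb huv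
            omega
  have Lax : ∀ v t : Fin n, v ≠ a → v ≠ b → v ≠ x → t ≠ a → t ≠ b → t ≠ x → v ≠ t →
      W a x + W a v + W a t + W x v + W x t + W v t ≤ 9 := by
    intro v t va vb vx ta tb tx hvt
    have e1 : W a v = 1 := Wa1 v va vb vx
    have e2 : W a t = 1 := Wa1 t ta tb tx
    by_cases hvy : y = v
    · subst hvy
      have e3 : W x t ≤ 2 := by
        rw [Ex_out t ta hvt.symm]
        exact rest2 x t xa xb ta tb tx.symm
      have e4 : W y t ≤ 2 := Wrest_le y t ya yb ta tb hvt
      omega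
    · by_cases hty : y = t
      · subst hty
        have e3 : W x v ≤ 2 := by
          rw [Ex_out v va (fun h => hvy h.symm)]
          exact rest2 x v xa xb va vb vx.symm
        have e4 : W v y ≤ 2 := Wrest_le v y va vb ya yb hvt
        omega
      · have e3 : W x v = w x v := Ex_out v va (fun h => hvy h.symm)
        have e4 : W x t = w x t := Ex_out t ta (fun h => hty h.symm)
        have e5 : W v t = w v t := Eout2 v t va vb vx (fun h => hvy h.symm)
        have hp := P1x v t va vb vx (fun h => hvy h.symm) ta tb tx (fun h => hty h.symm) hvt
        omega
  have Lby : ∀ v t : Fin n, v ≠ a → v ≠ b → v ≠ y → t ≠ a → t ≠ b → t ≠ y → v ≠ t →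
      W b y + W b v + W b t + W y v + W y t + W v t ≤ 9 := by
    intro v t va vb vy ta tb ty hvt
    have e1 : W b v = 1 := Wb1 v va vb vy
    have e2 : W b t = 1 := Wb1 t ta tb ty
    by_cases hvx : x = v
    · subst hvx
      have e3 : W y t ≤ 2 := by
        rw [Ey_out t tb hvt.symm]
        exact rest2 y t ya yb ta tb ty.symm
      have e4 : W y x = 1 := by rw [Wsym]; exact Exy
      have e5 : W x t ≤ 2 := Wrest_le x t xa xb ta tb hvt
      omega
    · by_cases htx : x = t
      · subst htx
        have e3 : W y v ≤ 2 := by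
          rw [Ey_out v vb (fun h => hvx h.symm)]
          exact rest2 y v ya yb va vb vy.symm
        have e4 : W y x = 1 := by rw [Wsym]; exact Exy
        have e5 : W v x ≤ 2 := Wrest_le v x va vb xa xb hvt
        omega
      · have e3 : W y v = w y v := Ey_out v vb (fun h => hvx h.symm)
        have e4 : W y t = w y t := Ey_out t tb (fun h => htx h.symm)
        have e5 : W v t = w v t := Eout2 v t va vb (fun h => hvx h.symm) vy
        have hp := P1y v t va vb (fun h => hvx h.symm) vy ta tb (fun h => htx h.symm) ty hvt
        omega
  have La : ∀ u v t : Fin n, u ≠ a → u ≠ b → v ≠ a → v ≠ b → t ≠ a → t ≠ b →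
      u ≠ v → u ≠ t → v ≠ t →
      W a u + W a v + W a t + W u v + W u t + W v t ≤ 9 := by
    intro u v t ua ub va vb ta tb huv hut hvt
    by_cases hux : x = u
    · subst hux
      exact Lax v t va vb huv.symm ta tb hut.symm hvt
    · by_cases hvx : x = v
      · subst hvx
        have H := Lax u t ua ub (fun h => hux h.symm) ta tb hvt.symm hut
        have e := Wsym u x
        omega
      · by_cases htx : x = t
        · subst htx
          have H := Lax u v ua ub (fun h => hux h.symm) va vb (fun h => hvx h.symm) huv
          have e1 := Wsym u x
          have e2 := Wsym v x
          omega
        · have e1 : W a u = 1 := Wa1 u ua ub (fun h => hux h.symm)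
          have e2 : W a v = 1 := Wa1 v va vb (fun h => hvx h.symm)
          have e3 : W a t = 1 := Wa1 t ta tb (fun h => htx h.symm)
          have i1 : W u v ≤ 2 := Wrest_le u v ua ub va vb huv
          have i2 : W u t ≤ 2 := Wrest_le u t ua ub ta tb hut
          have i3 : W v t ≤ 2 := Wrest_le v t va vb ta tb hvt
          omega
  have Lb : ∀ u v t : Fin n, u ≠ a → u ≠ b → v ≠ a → v ≠ b → t ≠ a → t ≠ b →
      u ≠ v → u ≠ t → v ≠ t →
      W b u + W b v + W b t + W u v + W u t + W v t ≤ 9 := by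
    intro u v t ua ub va vb ta tb huv hut hvt
    by_cases huy : y = u
    · subst huy
      exact Lby v t va vb huv.symm ta tb hut.symm hvt
    · by_cases hvy : y = v
      · subst hvy
        have H := Lby u t ua ub (fun h => huy h.symm) ta tb hvt.symm hut
        have e := Wsym u y
        omega
      · by_cases hty : y = t
        · subst hty
          have H := Lby u v ua ub (fun h => huy h.symm) va vb (fun h => hvy h.symm) huv
          have e1 := Wsym u y
          have e2 := Wsym v y
          omega
        · have e1 : W b u = 1 := Wb1 u ua ub (fun h => huy h.symm)
          have e2 : W b v = 1 := Wb1 v va vb (fun h => hvy h.symm)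
          have e3 : W b t = 1 := Wb1 t ta tb (fun h => hty h.symm)
          have i1 : W u v ≤ 2 := Wrest_le u v ua ub va vb huv
          have i2 : W u t ≤ 2 := Wrest_le u t ua ub ta tb hut
          have i3 : W v t ≤ 2 := Wrest_le v t va vb ta tb hvt
          omega
  have L0 : ∀ p q r s : Fin n, p ≠ a → p ≠ b → q ≠ a → q ≠ b → r ≠ a → r ≠ b →
      s ≠ a → s ≠ b → p ≠ q → p ≠ r → p ≠ s → q ≠ r → q ≠ s → r ≠ s →
      W p q + W p r + W p s + W q r + W q s + W r s ≤ 9 := by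
    intro p q r s pa pb qa qb ra rb sa sb hpq hpr hps hqr hqs hrs
    have b1 := Wrest_le_w p q pa pb qa qb hpq
    have b2 := Wrest_le_w p r pa pb ra rb hpr
    have b3 := Wrest_le_w p s pa pb sa sb hps
    have b4 := Wrest_le_w q r qa qb ra rb hqr
    have b5 := Wrest_le_w q s qa qb sa sb hqs
    have b6 := Wrest_le_w r s ra rb sa sb hrs
    have hs := six_le w hsym h49 hpq hpr hps hqr hqs hrs
    omega
  refine ⟨W, Wsym, ?_, ?_⟩
  · intro X hX
    obtain ⟨p, q, r, s, hpq, hpr, hps, hqr, hqs, hrs, rfl⟩ := exists_four hX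
    rw [quadS W Wsym hpq hpr hps hqr hqs hrs]
    by_cases hpa : a = p
    · subst hpa
      by_cases hqb : b = q
      · subst hqb
        exact Lab r s hpr.symm hqr.symm hps.symm hqs.symm hrs
      · by_cases hrb : b = r
        · subst hrb
          have H := Lab q s hpq.symm (fun h => hqb h.symm) hps.symm hrs.symm hqs
          have e := Wsym q b
          omega
        · by_cases hsb : b = s
          · subst hsb
            have H := Lab q r hpq.symm (fun h => hqb h.symm) hpr.symm (fun h => hrb h.symm) hqr
            have e1 := Wsym q b
            have e2 := Wsym r b
            omega
          · exact La q r s hpq.symm (fun h => hqb h.symm) hpr.symm (fun h => hrb h.symm)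
              hps.symm (fun h => hsb h.symm) hqr hqs hrs
    · by_cases hqa : a = q
      · subst hqa
        by_cases hpb : b = p
        · subst hpb
          have H := Lab r s hqr.symm hpr.symm hqs.symm hps.symm hrs
          have e := Wsym b a
          omega
        · by_cases hrb : b = r
          · subst hrb
            have H := Lab p s (fun h => hpa h.symm) (fun h => hpb h.symm) hqs.symm hrs.symm hps
            have e1 := Wsym p a
            have e2 := Wsym p b
            omega
          · by_cases hsb : b = s
            · subst hsb
              have H := Lab p r (fun h => hpa h.symm) (fun h => hpb h.symm) hqr.symm
                (fun h => hrb h.symm) hpr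
              have e1 := Wsym p a
              have e2 := Wsym p b
              have e3 := Wsym r b
              omega
            · have H := La p r s (fun h => hpa h.symm) (fun h => hpb h.symm) hqr.symm
                (fun h => hrb h.symm) hqs.symm (fun h => hsb h.symm) hpr hps hrs
              have e := Wsym p a
              omega
      · by_cases hra : a = r
        · subst hra
          by_cases hpb : b = p
          · subst hpb
            have H := Lab q s hqr hpq.symm hrs.symm hps.symm hqs
            have e1 := Wsym b a
            have e2 := Wsym q a
            omega
          · by_cases hqb : b = q
            · subst hqb
              have H := Lab p s hpr (fun h => hpb h.symm) hrs.symm hqs.symm hps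
              have e1 := Wsym p b
              have e2 := Wsym p a
              have e3 := Wsym b a
              omega
            · by_cases hsb : b = s
              · subst hsb
                have H := Lab p q hpr (fun h => hpb h.symm) hqr (fun h => hqb h.symm) hpq
                have e1 := Wsym p a
                have e2 := Wsym q a
                have e3 := Wsym p b
                have e4 := Wsym q b
                omega
              · have H := La p q s hpr (fun h => hpb h.symm) hqr (fun h => hqb h.symm)
                  hrs.symm (fun h => hsb h.symm) hpq hps hqs
                have e1 := Wsym p a
                have e2 := Wsym q a
                omega
        · by_cases hsa : a = s
          · subst hsa
            by_cases hpb : b = p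
            · subst hpb
              have H := Lab q r hqs hpq.symm hrs hpr.symm hqr
              have e1 := Wsym b a
              have e2 := Wsym q a
              have e3 := Wsym r a
              omega
            · by_cases hqb : b = q
              · subst hqb
                have H := Lab p r hps (fun h => hpb h.symm) hrs hqr.symm hpr
                have e1 := Wsym p b
                have e2 := Wsym p a
                have e3 := Wsym b a
                have e4 := Wsym r a
                omega
              · by_cases hrb : b = r
                · subst hrb
                  have H := Lab p q hps (fun h => hpb h.symm) hqs (fun h => hqb h.symm) hpq
                  have e1 := Wsym p b
                  have e2 := Wsym p a
                  have e3 := Wsym q b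
                  have e4 := Wsym q a
                  have e5 := Wsym b a
                  omega
                · have H := La p q r hps (fun h => hpb h.symm) hqs (fun h => hqb h.symm)
                    hrs (fun h => hrb h.symm) hpq hpr hqr
                  have e1 := Wsym p a
                  have e2 := Wsym q a
                  have e3 := Wsym r a
                  omega
          · by_cases hpb : b = p
            · subst hpb
              exact Lb q r s (fun h => hqa h.symm) hpq.symm (fun h => hra h.symm) hpr.symm
                (fun h => hsa h.symm) hps.symm hqr hqs hrs
            · by_cases hqb : b = q
              · subst hqb
                have H := Lb p r s (fun h => hpa h.symm) (fun h => hpb h.symm)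
                  (fun h => hra h.symm) hqr.symm (fun h => hsa h.symm) hqs.symm hpr hps hrs
                have e := Wsym p b
                omega
              · by_cases hrb : b = r
                · subst hrb
                  have H := Lb p q s (fun h => hpa h.symm) (fun h => hpb h.symm)
                    (fun h => hqa h.symm) (fun h => hqb h.symm) (fun h => hsa h.symm)
                    hrs.symm hpq hps hqs
                  have e1 := Wsym p b
                  have e2 := Wsym q b
                  omega
                · by_cases hsb : b = s
                  · subst hsb
                    have H := Lb p q r (fun h => hpa h.symm) (fun h => hpb h.symm)
                      (fun h => hqa h.symm) (fun h => hqb h.symm) (fun h => hra h.symm)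
                      (fun h => hrb h.symm) hpq hpr hqr
                    have e1 := Wsym p b
                    have e2 := Wsym q b
                    have e3 := Wsym r b
                    omega
                  · exact L0 p q r s (fun h => hpa h.symm) (fun h => hpb h.symm)
                      (fun h => hqa h.symm) (fun h => hqb h.symm) (fun h => hra h.symm)
                      (fun h => hrb h.symm) (fun h => hsa h.symm) (fun h => hsb h.symm)
                      hpq hpr hps hqr hqs hrs
  · have EoutQ : ∀ i j : Fin n, ¬(i = a ∨ i = b ∨ i = x ∨ i = y) ∨
        ¬(j = a ∨ j = b ∨ j = x ∨ j = y) → W i j = w i j := fun i j h => c1W_outQ w h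
    have hagree : ∀ i j : Fin n, i < j →
        (i ∉ ({a,b,x,y} : Finset (Fin n)) ∨ j ∉ ({a,b,x,y} : Finset (Fin n))) →
        W i j = w i j := by
      intro i j _ h
      apply EoutQ
      rcases h with h | h
      · exact Or.inl (by simpa [Finset.mem_insert] using h)
      · exact Or.inr (by simpa [Finset.mem_insert] using h)
    have hpc := prod_compare w W {a,b,x,y} hagree
    rw [quadP w hsym hab hax hay hbx hby hxy, quadP W Wsym hab hax hay hbx hby hxy] at hpc
    rw [h3, (cross1 x xa xb).1, (cross1 y ya yb).1, (cross1 x xa xb).2,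
      (cross1 y ya yb).2, Eab, Eax, Vay, Vbx, Eby, Exy] at hpc
    simpa using hpc

end C1

theorem extremal_multiplicity_le_two (n : ℕ) (hn : 4 ≤ n) (w : Fin n → Fin n → ℕ)
    (hsym : ∀ i j, w i j = w j i)
    (h49 : IsNSQ n 4 9 w)
    (hpos : ∀ i j : Fin n, i ≠ j → 1 ≤ w i j)
    (hmax : ∀ w' : Fin n → Fin n → ℕ, (∀ i j, w' i j = w' j i) →
      IsNSQ n 4 9 w' → mgP n w' Finset.univ ≤ mgP n w Finset.univ) :
    ∀ i j : Fin n, i ≠ j → w i j ≤ 2 := by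

  intro i j hij
  by_contra hgt
  push_neg at hgt
  have P1 := mgP_pos w hpos Finset.univ
  -- two fresh vertices c, d
  have hcij : ({i, j} : Finset (Fin n)).card < n := by
    have a1 : ({i, j} : Finset (Fin n)).card ≤ ({j} : Finset (Fin n)).card + 1 :=
      Finset.card_insert_le _ _
    have a2 : ({j} : Finset (Fin n)).card = 1 := Finset.card_singleton _
    omega
  obtain ⟨c, hc⟩ := exists_fresh {i, j} hcij
  simp only [Finset.mem_insert, Finset.mem_singleton] at hc
  push_neg at hc
  obtain ⟨ci, cj⟩ := hc
  have hcijc : ({i, j, c} : Finset (Fin n)).card < n := by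
    have a1 : ({i, j, c} : Finset (Fin n)).card ≤ ({j, c} : Finset (Fin n)).card + 1 :=
      Finset.card_insert_le _ _
    have a2 : ({j, c} : Finset (Fin n)).card ≤ ({c} : Finset (Fin n)).card + 1 :=
      Finset.card_insert_le _ _
    have a3 : ({c} : Finset (Fin n)).card = 1 := Finset.card_singleton _
    omega
  obtain ⟨d, hd⟩ := exists_fresh {i, j, c} hcijc
  simp only [Finset.mem_insert, Finset.mem_singleton] at hd
  push_neg at hd
  obtain ⟨di, dj, dc⟩ := hd
  -- w i j ≤ 4
  have hs0 := six_le w hsym h49 hij ci.symm di.symm cj.symm dj.symm dc.symm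
  have g1 := hpos i c ci.symm
  have g2 := hpos i d di.symm
  have g3 := hpos j c cj.symm
  have g4 := hpos j d dj.symm
  have g5 := hpos c d dc.symm
  have hv : w i j = 3 ∨ w i j = 4 := by omega
  rcases hv with hv3 | hv4
  · -- w i j = 3
    have rest2 : ∀ u v : Fin n, u ≠ i → u ≠ j → v ≠ i → v ≠ j → u ≠ v → w u v ≤ 2 := by
      intro u v ui uj vi vj huv
      have hs := six_le w hsym h49 hij ui.symm vi.symm uj.symm vj.symm huv
      have t1 := hpos i u ui.symm
      have t2 := hpos i v vi.symm
      have t3 := hpos j u uj.symm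
      have t4 := hpos j v vj.symm
      omega
    have cross_le : ∀ u : Fin n, u ≠ i → u ≠ j → w i u + w j u ≤ 3 := by
      intro u ui uj
      have hcard : ({i, j, u} : Finset (Fin n)).card < n := by
        have a1 : ({i, j, u} : Finset (Fin n)).card ≤ ({j, u} : Finset (Fin n)).card + 1 :=
          Finset.card_insert_le _ _
        have a2 : ({j, u} : Finset (Fin n)).card ≤ ({u} : Finset (Fin n)).card + 1 :=
          Finset.card_insert_le _ _
        have a3 : ({u} : Finset (Fin n)).card = 1 := Finset.card_singleton _
        omega
      obtain ⟨t, ht⟩ := exists_fresh {i, j, u} hcard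
      simp only [Finset.mem_insert, Finset.mem_singleton] at ht
      push_neg at ht
      obtain ⟨ti, tj, tu⟩ := ht
      have hs := six_le w hsym h49 hij ui.symm ti.symm uj.symm tj.symm tu.symm
      have t1 := hpos i t ti.symm
      have t2 := hpos j t tj.symm
      have t3 := hpos u t tu.symm
      omega
    by_cases hC : ∃ u : Fin n, u ≠ i ∧ u ≠ j ∧ w i u + w j u = 3
    · obtain ⟨e, ei, ej, hsum⟩ := hC
      have cross1' : ∀ v : Fin n, v ≠ i → v ≠ j → v ≠ e →
          w i v = 1 ∧ w j v = 1 ∧ w e v = 1 := by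
        intro v vi vj ve
        have hs := six_le w hsym h49 hij ei.symm vi.symm ej.symm vj.symm ve.symm
        have t1 := hpos i v vi.symm
        have t2 := hpos j v vj.symm
        have t3 := hpos e v ve.symm
        omega
      obtain ⟨W, Wsym, Wnsq, heq⟩ := tri_competitor w hsym h49 hij ei.symm ej.symm
        cross1' rest2
      have hip := hpos i e ei.symm
      have hjp := hpos j e ej.symm
      have hile : w i e ≤ 2 := by have := cross_le e ei ej; omega
      have prod2 : w i e * w j e = 2 := by
        have h1 : w i e = 1 ∨ w i e = 2 := by omega
        rcases h1 with h1 | h1 <;> rw [h1] <;> omega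
      rw [hv3, mul_assoc, prod2] at heq
      have hle := hmax W Wsym Wnsq
      omega
    · push_neg at hC
      have cross1 : ∀ u : Fin n, u ≠ i → u ≠ j → w i u = 1 ∧ w j u = 1 := by
        intro u ui uj
        have t1 := cross_le u ui uj
        have t2 := hC u ui uj
        have t3 := hpos i u ui.symm
        have t4 := hpos j u uj.symm
        omega
      by_cases hx : ∃ p q : Fin n, p ≠ i ∧ p ≠ j ∧ q ≠ i ∧ q ≠ j ∧ p ≠ q ∧ w p q = 2
      · obtain ⟨x, y, xi, xj, yi, yj, hxy, wxy2⟩ := hx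
        obtain ⟨W, Wsym, Wnsq, heq⟩ := c1_competitor w hsym h49 hpos hij xi.symm yi.symm
          xj.symm yj.symm hxy hv3 cross1 rest2 (Or.inl wxy2)
        rw [wxy2] at heq
        norm_num at heq
        have hle := hmax W Wsym Wnsq
        omega
      · push_neg at hx
        have hall : ∀ p q : Fin n, p ≠ i → p ≠ j → q ≠ i → q ≠ j → p ≠ q → w p q = 1 := by
          intro p q pi pj qi qj hpq
          have t1 := rest2 p q pi pj qi qj hpq
          have t2 := hx p q pi pj qi qj hpq
          have t3 := hpos p q hpq
          omega
        obtain ⟨W, Wsym, Wnsq, heq⟩ := c1_competitor w hsym h49 hpos hij ci.symm di.symm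
          cj.symm dj.symm dc.symm hv3 cross1 rest2 (Or.inr hall)
        have wcd : w c d = 1 := hall c d ci cj di dj dc.symm
        rw [wcd] at heq
        norm_num at heq
        have hle := hmax W Wsym Wnsq
        omega
  · -- w i j = 4
    have F : ∀ u v : Fin n, u ≠ i → u ≠ j → v ≠ i → v ≠ j → u ≠ v →
        w i u = 1 ∧ w j u = 1 ∧ w u v = 1 := by
      intro u v ui uj vi vj huv
      have hs := six_le w hsym h49 hij ui.symm vi.symm uj.symm vj.symm huv
      have t1 := hpos i u ui.symm
      have t2 := hpos i v vi.symm
      have t3 := hpos j u uj.symm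
      have t4 := hpos j v vj.symm
      have t5 := hpos u v huv
      omega
    have h1 : ∀ u : Fin n, u ≠ i → u ≠ j → u ≠ c → w i u = 1 ∧ w j u = 1 ∧ w c u = 1 := by
      intro u ui uj uc
      have f1 := F u c ui uj ci cj uc
      have f2 := F c u ci cj ui uj uc.symm
      exact ⟨f1.1, f1.2.1, f2.2.2⟩
    have h2 : ∀ u v : Fin n, u ≠ i → u ≠ j → v ≠ i → v ≠ j → u ≠ v → w u v ≤ 2 := by
      intro u v ui uj vi vj huv
      have := (F u v ui uj vi vj huv).2.2
      omega
    obtain ⟨W, Wsym, Wnsq, heq⟩ := tri_competitor w hsym h49 hij ci.symm cj.symm h1 h2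
    have hic : w i c = 1 := (F c d ci cj di dj dc.symm).1
    have hjc : w j c = 1 := (F c d ci cj di dj dc.symm).2.1
    rw [hv4, hic, hjc] at heq
    norm_num at heq
    have hle := hmax W Wsym Wnsq
    omega
end
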